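/- If w is small-height-containing (i.e., w = u s_β v with ℓ(w) = ℓ(u) + ℓ(s_β) + ℓ(v) for some non-simple reflection s_β with ℓ(s_β) = ⟨2ρ, β∨⟩ − 1), then d_Γ(w, 1) ≤ ℓ(w) − 2. -/

import Mathlib

/-!
Write `w = u s_β v` length-additively and walk down to the identity. Along a reduced word of `v`,
every step `x → x s_i` with `ℓ(x s_i) = ℓ(x) - 1` is a downward edge, because `⟨2ρ, α_i^∨⟩ = 2`
for a simple root (`s_i` permutes the positive roots other than `α_i`). This reaches `u s_β` after
`ℓ(v)` steps; the edge `u s_β → u` is downward precisely because `ℓ(s_β) = ⟨2ρ, β^∨⟩ - 1`, and `u`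
descends to `1` in `ℓ(u)` steps. The path has length `ℓ(w) - ℓ(s_β) + 1`, and `ℓ(s_β) ≥ 3`: it is
odd since every reflection has determinant `-1`, and it is not `1` since in a reduced root system
`s_β = s_α` forces `β = ±α`, while `β` is positive and not simple.
-/

open Finset

noncomputable section

namespace QBG

/-- The root system of the older Mathlib: a root pairing whose roots span. -/
structure RootSystem (ι R M N : Type*) [CommRing R] [AddCommGroup M] [Module R M]
    [AddCommGroup N] [Module R N] extends RootPairing ι R M N where
  span_eq_top : Submodule.span R (Set.range root) = ⊤

variable {ι V V' : Type*} [Fintype ι] [AddCommGroup V] [Module ℝ V]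
  [AddCommGroup V'] [Module ℝ V']

variable (P : RootSystem ι ℝ V V') (f : V →ₗ[ℝ] ℝ)

/-- `k` indexes a positive root (w.r.t. the regular linear functional `f`). -/
def Pos (k : ι) : Prop := 0 < f (P.root k)

/-- `k` indexes a simple root: positive and not a sum of two positive roots. -/
def IsSimple (k : ι) : Prop := Pos P f k ∧
  ¬ ∃ i j : ι, Pos P f i ∧ Pos P f j ∧ P.root k = P.root i + P.root j

/-- The reflection `s_α` associated to the root indexed by `k`. -/
def refl (k : ι) : V ≃ₗ[ℝ] V := P.reflection k

/-- `l` is a word in simple reflections with product `w`. -/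
def Wrd (w : V ≃ₗ[ℝ] V) (l : List ι) : Prop :=
  (∀ i ∈ l, IsSimple P f i) ∧ (l.map (refl P)).prod = w

/-- `w` lies in the Weyl group (generated by simple reflections). -/
def InW (w : V ≃ₗ[ℝ] V) : Prop := ∃ l, Wrd P f w l

/-- Coxeter length of `w` with respect to the simple reflections. -/
def len (w : V ≃ₗ[ℝ] V) : ℕ := sInf {n | ∃ l, Wrd P f w l ∧ l.length = n}

/-- The pairing `⟨2ρ, α_k^∨⟩` where `ρ` is the half-sum of positive roots. -/
def tworho (k : ι) : ℝ := ∑ i, if 0 < f (P.root i) then P.pairing i k else 0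

/-- An upward edge of the quantum Bruhat graph, from `w`, labeled `k`. -/
def UpStep (w : V ≃ₗ[ℝ] V) (k : ι) : Prop :=
  Pos P f k ∧ len P f (w * refl P k) = len P f w + 1

/-- A downward edge of the quantum Bruhat graph, from `w`, labeled `k`. -/
def DownStep (w : V ≃ₗ[ℝ] V) (k : ι) : Prop :=
  Pos P f k ∧ (len P f (w * refl P k) : ℝ) = (len P f w : ℝ) - tworho P f k + 1

/-- An edge of the quantum Bruhat graph, from `w`, labeled `k`. -/
def Step (w : V ≃ₗ[ℝ] V) (k : ι) : Prop := UpStep P f w k ∨ DownStep P f w k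

/-- `ks` is the list of labels of a directed path in the quantum Bruhat graph
starting at `w`. -/
def ValidPath : (V ≃ₗ[ℝ] V) → List ι → Prop
  | _, [] => True
  | w, k :: ks => Step P f w k ∧ ValidPath (w * refl P k) ks

/-- `ks` is the list of labels of an all-downward path starting at `w`. -/
def DownPath : (V ≃ₗ[ℝ] V) → List ι → Prop
  | _, [] => True
  | w, k :: ks => DownStep P f w k ∧ DownPath (w * refl P k) ks

/-- `ks` is the list of labels of an all-upward path starting at `w`. -/
def UpPath : (V ≃ₗ[ℝ] V) → List ι → Prop
  | _, [] => True
  | w, k :: ks => UpStep P f w k ∧ UpPath (w * refl P k) ks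

/-- The endpoint of the path starting at `w` with edge labels `ks`. -/
def pathEnd (w : V ≃ₗ[ℝ] V) (ks : List ι) : V ≃ₗ[ℝ] V := w * (ks.map (refl P)).prod

/-- The distance `d_Γ(u,v)` in the quantum Bruhat graph. -/
def dist (u v : V ≃ₗ[ℝ] V) : ℕ :=
  sInf {n | ∃ ks, ValidPath P f u ks ∧ pathEnd P u ks = v ∧ ks.length = n}

/-- The all-downward distance `d_↓(w)` from `w` to the identity. -/
def ddown (w : V ≃ₗ[ℝ] V) : ℕ :=
  sInf {n | ∃ ks, DownPath P f w ks ∧ pathEnd P w ks = 1 ∧ ks.length = n}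

open Classical in
/-- The pairing of `2ρ` with the weight of the path `(w, ks)`, i.e. the sum of
`⟨2ρ, α^∨⟩` over the downward edges of the path. -/
def downWeight : (V ≃ₗ[ℝ] V) → List ι → ℝ
  | _, [] => 0
  | w, k :: ks =>
      (if UpStep P f w k then 0 else tworho P f k) + downWeight (w * refl P k) ks

/-- `w` contains `v`: `w = u * v * u'` length-additively. -/
def Contains (w v : V ≃ₗ[ℝ] V) : Prop :=
  ∃ u u', InW P f u ∧ InW P f u' ∧ w = u * v * u' ∧
    len P f w = len P f u + len P f v + len P f u'

/-- `w` is small-height-avoiding: it contains no non-simple reflection `s_β`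
with `ℓ(s_β) = ⟨2ρ, β^∨⟩ - 1`. -/
def SmallHeightAvoiding (w : V ≃ₗ[ℝ] V) : Prop :=
  ¬ ∃ k : ι, Pos P f k ∧ ¬ IsSimple P f k ∧
      (len P f (refl P k) : ℝ) = tworho P f k - 1 ∧ Contains P f w (refl P k)

/-- The root system `P` is reduced. -/
def Reduced : Prop := ∀ i j : ι, P.root i ≠ (2 : ℝ) • P.root j

/-- The linear functional `f` is regular: it vanishes on no root. -/
def Regular : Prop := ∀ i : ι, f (P.root i) ≠ 0

lemma _root_.Module.det_preReflection {R M : Type*} [CommRing R] [AddCommGroup M] [Module R M]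
    [Module.Free R M] [Module.Finite R M] (x : M) (f : Module.Dual R M) :
    LinearMap.det (Module.preReflection x f) = 1 - f x := by
  classical
  let b := Module.Free.chooseBasis R M
  have hmat : LinearMap.toMatrix b b (Module.preReflection x f)
      = 1 + Matrix.replicateCol Unit (-(b.repr x)) * Matrix.replicateRow Unit (f ∘ b) := by
    ext i j
    simp [LinearMap.toMatrix_apply, Module.preReflection_apply, Matrix.one_apply,
      Matrix.mul_apply, Finsupp.single_apply, eq_comm]
    ring
  have hfx : f ∘ b ⬝ᵥ b.repr x = f x := by
    conv_rhs => rw [← b.sum_repr x, map_sum]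
    simp only [dotProduct, Function.comp_apply, map_smul, smul_eq_mul, mul_comm]
  rw [← LinearMap.det_toMatrix b, hmat, Matrix.det_one_add_replicateCol_mul_replicateRow,
    Finsupp.coe_neg, dotProduct_neg, hfx, sub_eq_add_neg]

lemma _root_.RootPairing.root_reflectionPerm_self {ι R M N : Type*} [CommRing R]
    [AddCommGroup M] [Module R M] [AddCommGroup N] [Module R N] (P : RootPairing ι R M N)
    (i : ι) : P.root (P.reflectionPerm i i) = -P.root i := by
  rw [RootPairing.root_reflectionPerm, RootPairing.reflection_apply_self]

section RootPairing

variable {ι R M N : Type*} [Field R] [CharZero R] [AddCommGroup M] [Module R M]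
  [AddCommGroup N] [Module R N] (P : RootPairing ι R M N)

lemma _root_.RootPairing.isReduced_of_root_ne_two_smul [Finite ι] [P.IsCrystallographic]
    (h : ∀ i j, P.root i ≠ (2 : R) • P.root j) : P.IsReduced := by
  refine ⟨fun i j hij => ?_⟩
  have h4 : P.pairingIn ℤ i j * P.pairingIn ℤ j i = 4 :=
    (P.coxeterWeightIn_eq_four_iff_not_linearIndependent ℤ).mpr hij
  have hneg (k : ι) : (-2 : R) • P.root k = (2 : R) • P.root (P.reflectionPerm k k) := by simp
  have hmem := P.pairingIn_pairingIn_mem_set_of_isCrystallographic i j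
  simp only [Set.mem_insert_iff, Set.mem_singleton_iff, Prod.mk.injEq] at hmem
  rcases hmem with
    h' | h' | h' | h' | h' | h' | h' | h' | h' | h' | h' | h' | h' | h' | h' | h' | h' <;>
    rw [h'.1, h'.2] at h4 <;> norm_num at h4
  -- The pairs left, in order: (4, 1), (1, 4), (-4, -1), (-1, -4), (2, 2), (-2, -2).
  · exact absurd ((P.pairingIn_one_four_iff ℤ j i).mp h'.symm) (h i j)
  · exact absurd ((P.pairingIn_one_four_iff ℤ i j).mp h') (h j i)
  · exact absurd ((P.pairingIn_neg_one_neg_four_iff ℤ j i).mp h'.symm) (hneg j ▸ h i _)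
  · exact absurd ((P.pairingIn_neg_one_neg_four_iff ℤ i j).mp h') (hneg i ▸ h j _)
  · exact .inl (congrArg P.root ((P.pairingIn_two_two_iff ℤ i j).mp h'))
  · exact .inr ((P.pairingIn_neg_two_neg_two_iff ℤ i j).mp h')

lemma _root_.RootPairing.eq_or_root_eq_neg_of_reflection_eq [P.IsReduced] {i j : ι}
    (h : P.reflection i = P.reflection j) : i = j ∨ P.root i = -P.root j := by
  have hdep : ¬ LinearIndependent R ![P.root i, P.root j] := by
    rw [LinearIndependent.pair_iff]
    push Not
    refine ⟨2, -P.pairing i j, ?_, fun h2 => absurd h2 two_ne_zero⟩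
    have := congrArg (· (P.root i)) h
    simp only [RootPairing.reflection_apply_self, RootPairing.reflection_apply_root] at this
    linear_combination (norm := module) -this
  rw [RootPairing.IsReduced.linearIndependent_iff] at hdep
  tauto

end RootPairing

section Positivity

variable {P f}
omit [Fintype ι]
open RootPairing

lemma pos_reflectionPerm_self_of_not_pos (hreg : Regular P f) {i : ι} (hi : ¬ Pos P f i) :
    Pos P f (P.reflectionPerm i i) := by
  have := (hreg i).lt_or_gt.resolve_right hi
  rw [Pos, root_reflectionPerm_self, map_neg]
  linarith

lemma Pos.not_pos_of_root_eq_neg {a i : ι} (ha : Pos P f a) (h : P.root i = -P.root a) :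
    ¬ Pos P f i := by
  rw [Pos, h, map_neg, neg_pos, not_lt]
  exact ha.le

lemma pos_reflectionPerm_of_pairing_nonpos {a j : ι} (ha : Pos P f a) (hj : Pos P f j)
    (h : P.pairing j a ≤ 0) : Pos P f (P.reflectionPerm a j) := by
  simp only [Pos, root_reflectionPerm, reflection_apply_root, map_sub,
    map_smul, smul_eq_mul] at ha hj ⊢
  nlinarith

end Positivity

section SimpleRoots

variable {P f}
open RootPairing

lemma IsSimple.pos_reflectionPerm (hP : P.IsCrystallographic) (hred : Reduced P)
    (hreg : Regular P f) {a : ι} (ha : IsSimple P f a) {j : ι} (hj : Pos P f j) (hja : j ≠ a) :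
    Pos P f (P.reflectionPerm a j) := by
  -- Induct on a bound for `⟨α_j, α_a^∨⟩`. When it is positive, `α_j - α_a` is a positive root
  -- whose pairing with `α_a^∨` is smaller by 2; were `s_a α_j` negative, `α_a` would be the sum
  -- of the positive roots `s_a (α_j - α_a) = s_a α_j + α_a` and `-s_a α_j`.
  obtain ⟨n, hn⟩ := exists_nat_ge (P.pairing j a)
  induction n generalizing j with
  | zero => exact pos_reflectionPerm_of_pairing_nonpos ha.1 hj (by simpa using hn)
  | succ n ih =>
    rcases le_or_gt (P.pairing j a) 0 with hle | hpos
    · exact pos_reflectionPerm_of_pairing_nonpos ha.1 hj hle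
    have hpos' : 0 < P.pairingIn ℤ j a := by simpa [← P.algebraMap_pairingIn ℤ] using hpos
    obtain ⟨d, hd⟩ := P.root_sub_root_mem_of_pairingIn_pos hpos' hja
    have hd_pos : Pos P f d := by
      by_contra hd_neg
      refine ha.2 ⟨j, _, hj, pos_reflectionPerm_self_of_not_pos hreg hd_neg, ?_⟩
      rw [root_reflectionPerm_self, hd]
      abel
    have hda : d ≠ a := by
      rintro rfl
      exact hred j d (by rw [two_smul]; exact (eq_sub_iff_add_eq.mp hd).symm)
    have hpd : P.pairing d a = P.pairing j a - 2 := by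
      have := congrArg (P.coroot' a) hd
      simp only [map_sub, root_coroot'_eq_pairing, pairing_same] at this
      exact this
    have hσd := ih hd_pos hda (by push_cast at hn; linarith)
    by_contra hneg
    refine ha.2 ⟨_, _, hσd, pos_reflectionPerm_self_of_not_pos hreg hneg, ?_⟩
    rw [root_reflectionPerm_self, root_reflectionPerm, root_reflectionPerm,
      reflection_apply_root, reflection_apply_root, hpd, hd]
    module

lemma tworho_eq_sum_pos [DecidablePred (Pos P f)] (k : ι) :
    tworho P f k = ∑ i ∈ univ.filter (Pos P f), P.pairing i k := by
  rw [tworho, Finset.sum_filter]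
  exact Finset.sum_congr rfl fun i _ => by simp only [Pos]; congr

lemma IsSimple.tworho_eq_two (hP : P.IsCrystallographic) (hred : Reduced P)
    (hreg : Regular P f) {a : ι} (ha : IsSimple P f a) : tworho P f a = 2 := by
  classical
  set S := (univ.filter (Pos P f)).erase a
  have hmaps : ∀ i ∈ S, P.reflectionPerm a i ∈ S := by
    intro i hi
    simp only [S, mem_erase, mem_filter, mem_univ, true_and] at hi ⊢
    refine ⟨fun h => ha.1.not_pos_of_root_eq_neg ?_ hi.2,
      ha.pos_reflectionPerm hP hred hreg hi.2 hi.1⟩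
    rw [← P.reflectionPerm_self a i, h, root_reflectionPerm_self]
  have hsum : ∑ i ∈ S, P.pairing (P.reflectionPerm a i) a = ∑ i ∈ S, P.pairing i a :=
    Finset.sum_equiv (P.reflectionPerm a)
      (fun i => ⟨hmaps i, fun h => P.reflectionPerm_self a i ▸ hmaps _ h⟩) (fun _ _ => rfl)
  simp only [← pairing_reflectionPerm, pairing_reflectionPerm_self_right,
    Finset.sum_neg_distrib] at hsum
  rw [tworho_eq_sum_pos, ← Finset.add_sum_erase _ _ (mem_filter.2 ⟨mem_univ _, ha.1⟩),
    P.pairing_same]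
  linarith

end SimpleRoots

section WeylGroup

variable {P f}
omit [Fintype ι]

lemma refl_mul_self (k : ι) : refl P k * refl P k = 1 := by
  rw [← sq]
  exact P.reflection_sq k

lemma refl_inv (k : ι) : (refl P k)⁻¹ = refl P k :=
  P.reflection_inv k

lemma mul_refl_mul_refl (w : V ≃ₗ[ℝ] V) (k : ι) : w * refl P k * refl P k = w := by
  rw [mul_assoc, refl_mul_self, mul_one]

lemma pathEnd_cons (w : V ≃ₗ[ℝ] V) (k : ι) (ks : List ι) :
    pathEnd P w (k :: ks) = pathEnd P (w * refl P k) ks := by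
  simp [pathEnd, mul_assoc]

lemma pathEnd_append (w : V ≃ₗ[ℝ] V) (ks ks' : List ι) :
    pathEnd P w (ks ++ ks') = pathEnd P (pathEnd P w ks) ks' := by
  simp [pathEnd, mul_assoc]

lemma wrd_nil : Wrd P f 1 [] := ⟨by simp, rfl⟩

lemma wrd_singleton {i : ι} (hi : IsSimple P f i) : Wrd P f (refl P i) [i] :=
  ⟨by simpa using hi, by simp⟩

lemma Wrd.append {w w' : V ≃ₗ[ℝ] V} {l l' : List ι} (h : Wrd P f w l) (h' : Wrd P f w' l') :
    Wrd P f (w * w') (l ++ l') := by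
  refine ⟨fun i hi => ?_, by rw [List.map_append, List.prod_append, h.2, h'.2]⟩
  rcases List.mem_append.1 hi with hi | hi
  exacts [h.1 i hi, h'.1 i hi]

lemma Wrd.len_le {w : V ≃ₗ[ℝ] V} {l : List ι} (h : Wrd P f w l) : len P f w ≤ l.length :=
  Nat.sInf_le ⟨l, h, rfl⟩

lemma InW.exists_wrd_length_eq_len {w : V ≃ₗ[ℝ] V} (hw : InW P f w) :
    ∃ l, Wrd P f w l ∧ l.length = len P f w :=
  Nat.sInf_mem <| by
    obtain ⟨l, hl⟩ := hw
    exact (⟨l.length, l, hl, rfl⟩ : {n | ∃ l, Wrd P f w l ∧ l.length = n}.Nonempty)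

lemma len_one : len P f (1 : V ≃ₗ[ℝ] V) = 0 :=
  Nat.le_zero.1 wrd_nil.len_le

lemma InW.mul {w w' : V ≃ₗ[ℝ] V} (h : InW P f w) (h' : InW P f w') : InW P f (w * w') :=
  let ⟨l, hl⟩ := h; let ⟨l', hl'⟩ := h'; ⟨l ++ l', hl.append hl'⟩

lemma InW.inv {w : V ≃ₗ[ℝ] V} (h : InW P f w) : InW P f w⁻¹ := by
  obtain ⟨l, hl⟩ := h
  refine ⟨l.reverse, fun i hi => hl.1 i (List.mem_reverse.1 hi), ?_⟩
  rw [← hl.2, List.prod_inv_reverse, List.map_map, List.map_reverse]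
  simp only [Function.comp_def, refl_inv]

lemma len_mul_le {w w' : V ≃ₗ[ℝ] V} (h : InW P f w) (h' : InW P f w') :
    len P f (w * w') ≤ len P f w + len P f w' := by
  obtain ⟨l, hl, hlen⟩ := h.exists_wrd_length_eq_len
  obtain ⟨l', hl', hlen'⟩ := h'.exists_wrd_length_eq_len
  simpa [hlen, hlen'] using (hl.append hl').len_le

lemma len_mul_eq_of_len_mul_mul_eq {x y z : V ≃ₗ[ℝ] V} (hx : InW P f x) (hy : InW P f y)
    (hz : InW P f z) (h : len P f (x * y * z) = len P f x + len P f y + len P f z) :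
    len P f (x * y) = len P f x + len P f y :=
  le_antisymm (len_mul_le hx hy) (by linarith [len_mul_le (hx.mul hy) hz])

lemma len_mul_refl_le {w : V ≃ₗ[ℝ] V} (hw : InW P f w) {i : ι} (hi : IsSimple P f i) :
    len P f (w * refl P i) ≤ len P f w + 1 :=
  (len_mul_le hw ⟨_, wrd_singleton hi⟩).trans (by simpa using (wrd_singleton hi).len_le)

end WeylGroup

section Reflections

variable {P f}

lemma det_refl (k : ι) : LinearEquiv.det (refl P k) = -1 := by
  have : Module.Finite ℝ V := ⟨P.span_eq_top ▸ Submodule.fg_span (Set.finite_range P.root)⟩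
  ext
  rw [LinearEquiv.coe_det]
  exact (Module.det_preReflection _ _).trans (by norm_num)

lemma Wrd.det_eq {w : V ≃ₗ[ℝ] V} {l : List ι} (h : Wrd P f w l) :
    LinearEquiv.det w = (-1) ^ l.length := by
  rw [← h.2, map_list_prod, List.map_map]
  simp [Function.comp_def, det_refl]

lemma InW.odd_len_refl {k : ι} (h : InW P f (refl P k)) : Odd (len P f (refl P k)) := by
  obtain ⟨l, hl, hlen⟩ := h.exists_wrd_length_eq_len
  have hdet := hl.det_eq
  rw [det_refl, hlen] at hdet
  exact (neg_one_pow_eq_neg_one_iff_odd (by norm_num [Units.ext_iff])).mp hdet.symm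

lemma len_refl_ne_one (hP : P.IsCrystallographic) (hred : Reduced P) {k : ι} (hk : Pos P f k)
    (hks : ¬ IsSimple P f k) (h : InW P f (refl P k)) : len P f (refl P k) ≠ 1 := by
  intro h1
  obtain ⟨l, hl, hlen⟩ := h.exists_wrd_length_eq_len
  obtain ⟨i, rfl⟩ := List.length_eq_one_iff.mp (hlen.trans h1)
  have hi : IsSimple P f i := hl.1 i (List.mem_singleton_self i)
  have : P.IsReduced := P.isReduced_of_root_ne_two_smul hred
  rcases P.eq_or_root_eq_neg_of_reflection_eq (by simpa [refl] using hl.2) with rfl | hneg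
  · exact hks hi
  · exact hk.not_pos_of_root_eq_neg hneg hi.1

lemma three_le_len_refl (hP : P.IsCrystallographic) (hred : Reduced P) {k : ι} (hk : Pos P f k)
    (hks : ¬ IsSimple P f k) (h : InW P f (refl P k)) : 3 ≤ len P f (refl P k) := by
  obtain ⟨m, hm⟩ := h.odd_len_refl
  have := len_refl_ne_one hP hred hk hks h
  omega

end Reflections

section Paths

variable {P f}

lemma ValidPath.append {w : V ≃ₗ[ℝ] V} {ks ks' : List ι} (h : ValidPath P f w ks)
    (h' : ValidPath P f (pathEnd P w ks) ks') : ValidPath P f w (ks ++ ks') := by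
  induction ks generalizing w with
  | nil => simpa [pathEnd] using h'
  | cons k ks ih => exact ⟨h.1, ih h.2 (by rwa [← pathEnd_cons])⟩

lemma ValidPath.dist_le {w v : V ≃ₗ[ℝ] V} {ks : List ι} (h : ValidPath P f w ks)
    (he : pathEnd P w ks = v) : dist P f w v ≤ ks.length :=
  Nat.sInf_le ⟨ks, h, he, rfl⟩

lemma IsSimple.downStep (hP : P.IsCrystallographic) (hred : Reduced P) (hreg : Regular P f)
    {i : ι} (hi : IsSimple P f i) {w : V ≃ₗ[ℝ] V}
    (h : len P f w = len P f (w * refl P i) + 1) : DownStep P f w i :=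
  ⟨hi.1, by rw [hi.tworho_eq_two hP hred hreg, h]; push_cast; ring⟩

lemma exists_validPath_of_wrd (hP : P.IsCrystallographic) (hred : Reduced P)
    (hreg : Regular P f) {x y : V ≃ₗ[ℝ] V} (hx : InW P f x) {l : List ι} (hl : Wrd P f y l)
    (h : len P f (x * y) = len P f x + l.length) :
    ∃ ks, ValidPath P f (x * y) ks ∧ pathEnd P (x * y) ks = x ∧ ks.length = l.length := by
  induction l generalizing x y with
  | nil => exact ⟨[], trivial, by simp [pathEnd, ← hl.2], rfl⟩
  | cons i l ih =>
    have hi : IsSimple P f i := hl.1 i (by simp)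
    have hl' : Wrd P f (l.map (refl P)).prod l := ⟨fun j hj => hl.1 j (by simp [hj]), rfl⟩
    have hxi : InW P f (x * refl P i) := hx.mul ⟨_, wrd_singleton hi⟩
    have hxy : x * y = x * refl P i * (l.map (refl P)).prod := by simp [← hl.2, mul_assoc]
    rw [hxy, List.length_cons] at h
    rw [hxy]
    have h₁ := len_mul_refl_le hx hi
    have h₂ := (len_mul_le hxi ⟨l, hl'⟩).trans (Nat.add_le_add_left hl'.len_le _)
    have hlen : len P f (x * refl P i) = len P f x + 1 := by omega
    obtain ⟨ks, hks, hend, hlen'⟩ := ih hxi hl' (by omega)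
    refine ⟨ks ++ [i], hks.append ?_, ?_, by simp [hlen']⟩
    · rw [hend]
      exact ⟨.inr (hi.downStep hP hred hreg (by rw [mul_refl_mul_refl, hlen])), trivial⟩
    · rw [pathEnd_append, hend, pathEnd_cons, mul_refl_mul_refl]
      exact mul_one x

lemma exists_validPath_of_len_mul_eq (hP : P.IsCrystallographic) (hred : Reduced P)
    (hreg : Regular P f) {x y : V ≃ₗ[ℝ] V} (hx : InW P f x) (hy : InW P f y)
    (h : len P f (x * y) = len P f x + len P f y) :
    ∃ ks, ValidPath P f (x * y) ks ∧ pathEnd P (x * y) ks = x ∧ ks.length = len P f y := by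
  obtain ⟨l, hl, hlen⟩ := hy.exists_wrd_length_eq_len
  rw [← hlen] at h ⊢
  exact exists_validPath_of_wrd hP hred hreg hx hl h

lemma InW.exists_validPath_to_one (hP : P.IsCrystallographic) (hred : Reduced P)
    (hreg : Regular P f) {y : V ≃ₗ[ℝ] V} (hy : InW P f y) :
    ∃ ks, ValidPath P f y ks ∧ pathEnd P y ks = 1 ∧ ks.length = len P f y := by
  simpa using exists_validPath_of_len_mul_eq hP hred hreg ⟨[], wrd_nil⟩ hy (by simp [len_one])

end Paths

/-- if `w` is small-height-containing, then `d_Γ(w, 1) ≤ ℓ(w) - 2`. -/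
theorem dist_le_of_smallHeightContaining (hP : P.IsCrystallographic) (hred : Reduced P) (hreg : Regular P f)
    (w : V ≃ₗ[ℝ] V) (hw : InW P f w) (hshc : ¬ SmallHeightAvoiding P f w) :
    dist P f w 1 + 2 ≤ len P f w := by
  obtain ⟨k, hk, hks, hlen_k, u, u', hu, hu', rfl, hadd⟩ := not_not.mp hshc
  have hs : InW P f (refl P k) := by simpa [mul_assoc] using (hu.inv.mul hw).mul hu'.inv
  have h3 := three_le_len_refl hP hred hk hks hs
  have hlen_us := len_mul_eq_of_len_mul_mul_eq hu hs hu' hadd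
  obtain ⟨ks₁, hv₁, he₁, hl₁⟩ :=
    exists_validPath_of_len_mul_eq hP hred hreg (hu.mul hs) hu' (by omega)
  obtain ⟨ks₂, hv₂, he₂, hl₂⟩ := hu.exists_validPath_to_one hP hred hreg
  have hdown : DownStep P f (u * refl P k) k :=
    ⟨hk, by rw [mul_refl_mul_refl, hlen_us]; push_cast; linarith⟩
  have hpath : ValidPath P f (u * refl P k * u') (ks₁ ++ k :: ks₂) := by
    refine hv₁.append ?_
    rw [he₁]
    exact ⟨.inr hdown, by rwa [mul_refl_mul_refl]⟩
  have hend : pathEnd P (u * refl P k * u') (ks₁ ++ k :: ks₂) = 1 := by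
    rw [pathEnd_append, he₁, pathEnd_cons, mul_refl_mul_refl, he₂]
  have := hpath.dist_le hend
  simp only [List.length_append, List.length_cons] at this
  omega

end QBG
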